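/- Let n = 2 and let (p,q,(u,v)) be a normal extremal on [t0,t1] (λ > 0) that is neither u-singular nor v-singular on any nondegenerate subinterval, and such that Δ_A(q(t)) ≠ 0 and g(q(t)) := Δ_Bv(q(t))/Δ_A(q(t)) > 0 for all t ∈ [t0,t1]. Then φ_v has at most one zero in [t0,t1]; moreover if φ_v(τ) = 0 then φ_v(t) > 0 for all t ∈ [t0,τ) and φ_v(t) < 0 for all t ∈ (τ,t1] (so the only possible v-switching is from c = v_max to b = v_min). -/

import Mathlib

open MeasureTheory Set

noncomputable section

/-- Euclidean dot product on `ℝⁿ`. -/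
def dotp {n : ℕ} (p q : Fin n → ℝ) : ℝ := ∑ i, p i * q i

/-- Lie bracket `[F, G](x) = DG(x) F(x) - DF(x) G(x)`. -/
def lieBracket {n : ℕ} (F G : (Fin n → ℝ) → (Fin n → ℝ)) (x : Fin n → ℝ) : Fin n → ℝ :=
  fderiv ℝ G x (F x) - fderiv ℝ F x (G x)

/-- Determinant of two vectors of `ℝ²`. -/
def det2 (x y : Fin 2 → ℝ) : ℝ := x 0 * y 1 - x 1 * y 0

section Aux

theorem sub_le_integral_aux {g g' φ : ℝ → ℝ} {a b : ℝ} (hab : a ≤ b)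
    (hcont : ContinuousOn g (Icc a b))
    (hderiv : ∀ x ∈ Ico a b, HasDerivWithinAt g (g' x) (Ioi x) x ∨
      ∀ u ∈ Ioc x b, g u - g x ≤ g' x * (u - x))
    (φint : IntegrableOn φ (Icc a b)) (hφg : ∀ x ∈ Ico a b, g' x ≤ φ x) :
    g b - g a ≤ ∫ y in a..b, φ y := by
  refine le_of_forall_pos_le_add fun ε εpos => ?_
  -- Bound from above `g'` by a lower-semicontinuous function `G'`.
  rcases exists_lt_lowerSemicontinuous_integral_lt φ φint εpos with
    ⟨G', f_lt_G', G'cont, G'int, G'lt_top, hG'⟩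
  -- we will show by "induction" that `g t - g a ≤ ∫ u in a..t, G' u` for all `t ∈ [a, b]`.
  set s := {t | g t - g a ≤ ∫ u in a..t, (G' u).toReal} ∩ Icc a b
  -- the set `s` of points where this property holds is closed.
  have s_closed : IsClosed s := by
    have : ContinuousOn (fun t => (g t - g a, ∫ u in a..t, (G' u).toReal)) (Icc a b) := by
      rw [← uIcc_of_le hab] at G'int hcont ⊢
      exact (hcont.sub continuousOn_const).prodMk (intervalIntegral.continuousOn_primitive_interval G'int)
    simp only [s, inter_comm]
    exact this.preimage_isClosed_of_isClosed isClosed_Icc OrderClosedTopology.isClosed_le'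
  have main : Icc a b ⊆ {t | g t - g a ≤ ∫ u in a..t, (G' u).toReal} := by
    refine s_closed.Icc_subset_of_forall_exists_gt
      (by simp only [intervalIntegral.integral_same, mem_setOf_eq, sub_self, le_rfl]) fun t ht v t_lt_v => ?_
    obtain ⟨y, g'_lt_y', y_lt_G'⟩ : ∃ y : ℝ, (g' t : EReal) < y ∧ (y : EReal) < G' t :=
      EReal.lt_iff_exists_real_btwn.1 ((EReal.coe_le_coe_iff.2 (hφg t ht.2)).trans_lt (f_lt_G' t))
    have I1 : ∀ᶠ u in nhdsWithin t (Ioi t), (u - t) * y ≤ ∫ w in t..u, (G' w).toReal := by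
      have B : ∀ᶠ u in nhds t, (y : EReal) < G' u := G'cont.lowerSemicontinuousAt _ _ y_lt_G'
      rcases mem_nhds_iff_exists_Ioo_subset.1 B with ⟨m, M, ⟨hm, hM⟩, H⟩
      have : Ioo t (min M b) ∈ nhdsWithin t (Ioi t) := Ioo_mem_nhdsGT (lt_min hM ht.right.right)
      filter_upwards [this] with u hu
      have I : Icc t u ⊆ Icc a b := Icc_subset_Icc ht.2.1 (hu.2.le.trans (min_le_right _ _))
      calc
        (u - t) * y = ∫ _ in Icc t u, y := by
          simp only [MeasureTheory.integral_const, MeasurableSet.univ, measureReal_restrict_apply,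
            univ_inter, hu.left.le, Real.volume_real_Icc_of_le, smul_eq_mul]
        _ ≤ ∫ w in t..u, (G' w).toReal := by
          rw [intervalIntegral.integral_of_le hu.1.le, ← integral_Icc_eq_integral_Ioc]
          apply setIntegral_mono_ae_restrict
          · simp
          · exact IntegrableOn.mono_set G'int I
          · have C1 : ∀ᵐ x : ℝ ∂volume.restrict (Icc t u), G' x < ⊤ :=
              ae_mono (Measure.restrict_mono I le_rfl) G'lt_top
            have C2 : ∀ᵐ x : ℝ ∂volume.restrict (Icc t u), x ∈ Icc t u :=
              ae_restrict_mem measurableSet_Icc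
            filter_upwards [C1, C2] with x G'x hx
            apply EReal.coe_le_coe_iff.1
            have : x ∈ Ioo m M := by
              simp only [hm.trans_le hx.left,
                (hx.right.trans_lt hu.right).trans_le (min_le_left M b), mem_Ioo, and_self_iff]
            refine (H this).out.le.trans_eq ?_
            exact (EReal.coe_toReal G'x.ne (f_lt_G' x).ne_bot).symm
    have I2 : ∀ᶠ u in nhdsWithin t (Ioi t), g u - g t ≤ (u - t) * y := by
      have g'_lt_y : g' t < y := EReal.coe_lt_coe_iff.1 g'_lt_y'
      rcases hderiv t ⟨ht.2.1, ht.2.2⟩ with H | H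
      · filter_upwards [H.limsup_slope_le' (notMem_Ioi.2 le_rfl) g'_lt_y,
          self_mem_nhdsWithin] with u hu t_lt_u
        have := mul_le_mul_of_nonneg_left hu.le (sub_pos.2 t_lt_u.out).le
        rwa [← smul_eq_mul, sub_smul_slope] at this
      · have : Ioc t b ∈ nhdsWithin t (Ioi t) := Ioc_mem_nhdsGT_of_mem ⟨le_rfl, ht.2.2⟩
        filter_upwards [this] with u hu
        have hut : 0 < u - t := sub_pos.2 hu.1
        calc g u - g t ≤ g' t * (u - t) := H u hu
          _ ≤ (u - t) * y := by rw [mul_comm]; exact mul_le_mul_of_nonneg_left g'_lt_y.le hut.le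
    have I3 : ∀ᶠ u in nhdsWithin t (Ioi t), g u - g t ≤ ∫ w in t..u, (G' w).toReal := by
      filter_upwards [I1, I2] with u hu1 hu2 using hu2.trans hu1
    have I4 : ∀ᶠ u in nhdsWithin t (Ioi t), u ∈ Ioc t (min v b) := by
      refine mem_nhdsGT_iff_exists_Ioc_subset.2 ⟨min v b, ?_, Subset.rfl⟩
      simp only [lt_min_iff, mem_Ioi]
      exact ⟨t_lt_v, ht.2.2⟩
    rcases (I3.and I4).exists with ⟨x, hx, h'x⟩
    refine ⟨x, ?_, Ioc_subset_Ioc le_rfl (min_le_left _ _) h'x⟩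
    calc
      g x - g a = g t - g a + (g x - g t) := by abel
      _ ≤ (∫ w in a..t, (G' w).toReal) + ∫ w in t..x, (G' w).toReal := add_le_add ht.1 hx
      _ = ∫ w in a..x, (G' w).toReal := by
        apply intervalIntegral.integral_add_adjacent_intervals
        · rw [intervalIntegrable_iff_integrableOn_Ioc_of_le ht.2.1]
          exact IntegrableOn.mono_set G'int
            (Ioc_subset_Icc_self.trans (Icc_subset_Icc le_rfl ht.2.2.le))
        · rw [intervalIntegrable_iff_integrableOn_Ioc_of_le h'x.1.le]
          apply IntegrableOn.mono_set G'int
          exact Ioc_subset_Icc_self.trans (Icc_subset_Icc ht.2.1 (h'x.2.trans (min_le_right _ _)))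
  calc
    g b - g a ≤ ∫ y in a..b, (G' y).toReal := main (right_mem_Icc.2 hab)
    _ ≤ (∫ y in a..b, φ y) + ε := by
      convert! hG'.le <;>
        · rw [intervalIntegral.integral_of_le hab]
          simp only [integral_Icc_eq_integral_Ioc', Real.volume_singleton]

theorem decay_of_ae_deriv_le {f : ℝ → ℝ} {α β K δ : ℝ} (hK : 0 ≤ K)
    (hlip : ∀ x ∈ Icc α β, ∀ y ∈ Icc α β, |f x - f y| ≤ K * |x - y|)
    (hae : ∀ᵐ x ∂volume, x ∈ Icc α β → ∃ w, w ≤ -δ ∧ HasDerivWithinAt f w (Icc α β) x) :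
    ∀ s ∈ Icc α β, ∀ t ∈ Icc α β, s ≤ t → f t - f s ≤ -δ * (t - s) := by
  intro s hs t ht hst
  obtain ⟨N', hNsub, hNmeas, hNnull⟩ :=
    exists_measurable_superset_of_null (ae_iff.1 hae)
  have hgood : ∀ x, x ∉ N' → x ∈ Icc α β → ∃ w, w ≤ -δ ∧ HasDerivWithinAt f w (Icc α β) x := by
    intro x hx hx'
    by_contra h
    exact hx (hNsub (fun hh => h (hh hx')))
  classical
  set g' : ℝ → ℝ := fun x =>
    if h : x ∉ N' ∧ x ∈ Icc α β then Classical.choose (hgood x h.1 h.2) else K with hg'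
  set φ : ℝ → ℝ := fun x => if x ∈ N' then K else -δ with hφ
  have hIcc : Icc s t ⊆ Icc α β := Icc_subset_Icc hs.1 ht.2
  have flip : LipschitzOnWith ⟨K, hK⟩ f (Icc α β) := by
    apply LipschitzOnWith.of_dist_le_mul
    intro x hx y hy
    rw [Real.dist_eq, Real.dist_eq]
    exact hlip x hx y hy
  have key : f t - f s ≤ ∫ y in s..t, φ y := by
    apply sub_le_integral_aux (g' := g') hst
    · exact flip.continuousOn.mono hIcc
    · intro x hx
      by_cases hxN : x ∈ N'
      · right
        intro z hz
        have h1 := hlip z (hIcc ⟨hx.1.trans hz.1.le, hz.2⟩) x (hIcc ⟨hx.1, hx.2.le⟩)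
        have hg : g' x = K := by
          simp only [hg', hxN, not_true_eq_false, false_and, dite_false]
        rw [hg]
        calc f z - f x ≤ |f z - f x| := le_abs_self _
          _ ≤ K * |z - x| := h1
          _ = K * (z - x) := by rw [abs_of_pos (sub_pos.2 hz.1)]
      · left
        have hmem : x ∈ Icc α β := hIcc ⟨hx.1, hx.2.le⟩
        have h : ¬x ∈ N' ∧ x ∈ Icc α β := ⟨hxN, hmem⟩
        have hspec := Classical.choose_spec (hgood x h.1 h.2)
        have hg : g' x = Classical.choose (hgood x h.1 h.2) := by
          simp only [hg', h.1, h.2, and_self, dite_true, not_false_eq_true]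
        rw [hg]
        have H : HasDerivWithinAt f (Classical.choose (hgood x h.1 h.2)) (Ioc x t) x :=
          hspec.2.mono (fun z hz => hIcc ⟨hx.1.trans hz.1.le, hz.2⟩)
        exact H.mono_of_mem_nhdsWithin (Ioc_mem_nhdsGT_of_mem ⟨le_rfl, hx.2⟩)
    · have hconst : IntegrableOn (fun _ : ℝ => -δ) (Icc s t) volume := integrableOn_const (by
        simp [Real.volume_Icc])
      apply hconst.congr
      apply ae_restrict_of_ae
      filter_upwards [compl_mem_ae_iff.mpr hNnull] with y hy
      simp only [hφ, if_neg hy]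
    · intro x hx
      by_cases hxN : x ∈ N'
      · simp only [hg', hφ, hxN, not_true_eq_false, false_and, dite_false, if_true, le_refl]
      · have hmem : x ∈ Icc α β := hIcc ⟨hx.1, hx.2.le⟩
        have h : ¬x ∈ N' ∧ x ∈ Icc α β := ⟨hxN, hmem⟩
        have hspec := Classical.choose_spec (hgood x h.1 h.2)
        simp only [hg', hφ, hxN, h, and_self, dite_true, if_false, not_false_eq_true]
        exact hspec.1
  have : ∫ y in s..t, φ y = -δ * (t - s) := by
    have heq : ∀ᵐ y ∂volume, y ∈ Set.uIoc s t → φ y = -δ := by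
      filter_upwards [compl_mem_ae_iff.mpr hNnull] with y hy _
      simp only [hφ, if_neg hy]
    rw [intervalIntegral.integral_congr_ae heq, intervalIntegral.integral_const, smul_eq_mul]
    ring
  linarith [key, this.ge]

lemma clm_two (L : (Fin 2 → ℝ) →L[ℝ] (Fin 2 → ℝ)) (w : Fin 2 → ℝ) (j : Fin 2) :
    L w j = w 0 * L (Pi.single 0 1) j + w 1 * L (Pi.single 1 1) j := by
  have hw : w = w 0 • (Pi.single 0 1 : Fin 2 → ℝ) + w 1 • (Pi.single 1 1 : Fin 2 → ℝ) := by
    funext i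
    fin_cases i <;> simp [Pi.single_apply]
  conv_lhs => rw [hw]
  rw [map_add, _root_.map_smul, _root_.map_smul]
  simp

lemma hasDeriv_phiv {F G : (Fin 2 → ℝ) → (Fin 2 → ℝ)} (hF : ContDiff ℝ (⊤ : ℕ∞) F)
    {p q : ℝ → Fin 2 → ℝ} {u v : ℝ → ℝ} {I : Set ℝ} {t : ℝ}
    (hp : HasDerivWithinAt p
      (fun i => -(v t * dotp (p t) (fderiv ℝ F (q t) (Pi.single i 1)) +
                  u t * dotp (p t) (fderiv ℝ G (q t) (Pi.single i 1)))) I t)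
    (hq : HasDerivWithinAt q (fun i => v t * F (q t) i + u t * G (q t) i) I t) :
    HasDerivWithinAt (fun s => dotp (p s) (F (q s)))
      (-(u t) * dotp (p t) (lieBracket F G (q t))) I t := by
  have hFd : HasFDerivAt F (fderiv ℝ F (q t)) (q t) :=
    (hF.differentiable (by simp) (q t)).hasFDerivAt
  have hFq : HasDerivWithinAt (fun s => F (q s))
      (fderiv ℝ F (q t) (fun i => v t * F (q t) i + u t * G (q t) i)) I t :=
    hFd.comp_hasDerivWithinAt t hq
  have hpi := hasDerivWithinAt_pi.1 hp
  have hFqi := hasDerivWithinAt_pi.1 hFq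
  have hsum : HasDerivWithinAt (fun s => ∑ i, p s i * F (q s) i)
      (∑ i : Fin 2, ((-(v t * dotp (p t) (fderiv ℝ F (q t) (Pi.single i 1)) +
                  u t * dotp (p t) (fderiv ℝ G (q t) (Pi.single i 1)))) * F (q t) i +
        p t i * fderiv ℝ F (q t) (fun i => v t * F (q t) i + u t * G (q t) i) i)) I t :=
    HasDerivWithinAt.fun_sum (fun i _ => (hpi i).mul (hFqi i))
  have : HasDerivWithinAt (fun s => dotp (p s) (F (q s)))
      (∑ i : Fin 2, ((-(v t * dotp (p t) (fderiv ℝ F (q t) (Pi.single i 1)) +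
                  u t * dotp (p t) (fderiv ℝ G (q t) (Pi.single i 1)))) * F (q t) i +
        p t i * fderiv ℝ F (q t) (fun i => v t * F (q t) i + u t * G (q t) i) i)) I t := by
    simpa only [dotp] using hsum
  convert this using 1
  simp only [dotp, lieBracket, Fin.sum_univ_two, Pi.sub_apply]
  rw [clm_two (fderiv ℝ F (q t)) (fun i => v t * F (q t) i + u t * G (q t) i) 0,
      clm_two (fderiv ℝ F (q t)) (fun i => v t * F (q t) i + u t * G (q t) i) 1,
      clm_two (fderiv ℝ G (q t)) (F (q t)) 0,
      clm_two (fderiv ℝ G (q t)) (F (q t)) 1,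
      clm_two (fderiv ℝ F (q t)) (G (q t)) 0,
      clm_two (fderiv ℝ F (q t)) (G (q t)) 1]
  ring

lemma ae_imp_everywhere {α β : ℝ} (hαβ : α < β) {f : ℝ → ℝ} (hf : ContinuousOn f (Icc α β))
    (h : ∀ᵐ t ∂volume, t ∈ Icc α β → 0 ≤ f t) : ∀ t ∈ Icc α β, 0 ≤ f t := by
  intro τ hτ
  by_contra hneg
  push_neg at hneg
  have hev : ∀ᶠ x in nhdsWithin τ (Icc α β), f x < 0 :=
    (hf τ hτ).eventually (eventually_lt_nhds hneg)  -- f x tends to f τ < 0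
  obtain ⟨η, hη, hball⟩ := Metric.mem_nhdsWithin_iff.1 hev
  have hnull : volume {t | ¬(t ∈ Icc α β → 0 ≤ f t)} = 0 := ae_iff.1 h
  set m : ℝ := min β (τ + η) with hm
  set l : ℝ := max α (τ - η) with hl
  have hsub : Ioo l m ⊆ {t | ¬(t ∈ Icc α β → 0 ≤ f t)} := by
    intro x hx
    have hxIcc : x ∈ Icc α β := ⟨(le_max_left _ _).trans hx.1.le, hx.2.le.trans (min_le_left _ _)⟩
    have hxd : dist x τ < η := by
      rw [Real.dist_eq, abs_lt]
      constructor
      · have := hx.1; have := le_max_right α (τ - η); simp only [hl] at hx; linarith [lt_of_le_of_lt (le_max_right α (τ - η)) hx.1]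
      · have := hx.2; have := min_le_right β (τ + η); simp only [hm] at hx; linarith [lt_of_lt_of_le hx.2 (min_le_right β (τ + η))]
    intro hc
    exact absurd (hc hxIcc) (not_le.2 (hball ⟨Metric.mem_ball.2 hxd, hxIcc⟩))
  have hlm : l < m := by
    rcases lt_or_ge τ β with hc | hc
    · have : l ≤ τ := max_le hτ.1 (by linarith)
      have : l < m := lt_of_le_of_lt (max_le hτ.1 (by linarith)) (lt_min hc (by linarith))
      exact this
    · have hτβ : τ = β := le_antisymm hτ.2 hc
      have : l < τ := max_lt (by linarith) (by linarith)
      exact lt_of_lt_of_le this (le_min (by linarith) (by linarith))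
  have : volume (Ioo l m) = 0 := measure_mono_null hsub hnull
  rw [Real.volume_Ioo] at this
  simp only [ENNReal.ofReal_eq_zero] at this
  linarith

lemma abs_dotp_le (x y : Fin 2 → ℝ) : |dotp x y| ≤ 2 * ‖x‖ * ‖y‖ := by
  have h0x : |x 0| ≤ ‖x‖ := by simpa using norm_le_pi_norm x 0
  have h1x : |x 1| ≤ ‖x‖ := by simpa using norm_le_pi_norm x 1
  have h0y : |y 0| ≤ ‖y‖ := by simpa using norm_le_pi_norm y 0
  have h1y : |y 1| ≤ ‖y‖ := by simpa using norm_le_pi_norm y 1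
  have hx : (0:ℝ) ≤ ‖x‖ := norm_nonneg x
  have hy : (0:ℝ) ≤ ‖y‖ := norm_nonneg y
  have : |dotp x y| ≤ |x 0| * |y 0| + |x 1| * |y 1| := by
    rw [dotp, Fin.sum_univ_two]
    calc |x 0 * y 0 + x 1 * y 1| ≤ |x 0 * y 0| + |x 1 * y 1| := abs_add_le _ _
      _ = |x 0| * |y 0| + |x 1| * |y 1| := by rw [abs_mul, abs_mul]
  nlinarith [abs_nonneg (x 0), abs_nonneg (y 0), abs_nonneg (x 1), abs_nonneg (y 1)]

lemma dotp_sub_left (x x' y : Fin 2 → ℝ) : dotp (x - x') y = dotp x y - dotp x' y := by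
  simp [dotp, Fin.sum_univ_two, Pi.sub_apply]; ring

lemma dotp_sub_right (x y y' : Fin 2 → ℝ) : dotp x (y - y') = dotp x y - dotp x y' := by
  simp [dotp, Fin.sum_univ_two, Pi.sub_apply]; ring

/-- A smooth vector field composed with a Lipschitz curve gives Lipschitz `dotp` pairings. -/

lemma lip_dotp {F : (Fin 2 → ℝ) → (Fin 2 → ℝ)} (hF : ContDiff ℝ (⊤ : ℕ∞) F)
    {p q : ℝ → Fin 2 → ℝ} {α β : ℝ} {Kp Kq : NNReal}
    (hp : LipschitzOnWith Kp p (Icc α β)) (hq : LipschitzOnWith Kq q (Icc α β)) :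
    ∃ K : ℝ, 0 ≤ K ∧ ∀ x ∈ Icc α β, ∀ y ∈ Icc α β,
      |dotp (p x) (F (q x)) - dotp (p y) (F (q y))| ≤ K * |x - y| := by
  rcases isEmpty_or_nonempty (Icc α β : Set ℝ) |>.symm with hne | hemp
  swap
  · exact ⟨0, le_refl 0, fun x hx => absurd ⟨x, hx⟩ (not_nonempty_iff.2 hemp)⟩
  have hqc : ContinuousOn q (Icc α β) := hq.continuousOn
  have hpc : ContinuousOn p (Icc α β) := hp.continuousOn
  have hcomp : IsCompact (q '' Icc α β) := isCompact_Icc.image_of_continuousOn hqc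
  obtain ⟨R, hR⟩ := hcomp.isBounded.subset_closedBall 0
  -- Lipschitz constant of F on the closed ball
  have hFc : Continuous (fderiv ℝ F) := (hF.fderiv_right (m := (⊤ : ℕ∞)) le_rfl).continuous
  obtain ⟨CF, hCF⟩ := (isCompact_closedBall (0 : Fin 2 → ℝ) R).exists_bound_of_continuousOn
    hFc.continuousOn
  set CF' : NNReal := ⟨max CF 0, le_max_right _ _⟩
  have hFlip : LipschitzOnWith CF' F (Metric.closedBall 0 R) := by
    apply (convex_closedBall (0 : Fin 2 → ℝ) R).lipschitzOnWith_of_nnnorm_fderiv_le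
      (fun x _ => (hF.differentiable (by simp)).differentiableAt)
    intro x hx
    have := hCF x hx
    rw [← NNReal.coe_le_coe]
    exact le_trans this (le_max_left _ _)
  -- bounds
  obtain ⟨Cp, hCp⟩ := (isCompact_Icc.image_of_continuousOn hpc).exists_bound_of_continuousOn
    continuousOn_id
  obtain ⟨CFq, hCFq⟩ := (isCompact_Icc.image_of_continuousOn
    (hF.continuous.comp_continuousOn hqc)).exists_bound_of_continuousOn continuousOn_id
  have hCp' : ∀ x ∈ Icc α β, ‖p x‖ ≤ Cp := fun x hx => by
    simpa using hCp (p x) (mem_image_of_mem p hx)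
  have hCFq' : ∀ x ∈ Icc α β, ‖F (q x)‖ ≤ CFq := fun x hx => by
    simpa using hCFq (F (q x)) (mem_image_of_mem _ hx)
  have hCp0 : 0 ≤ Cp := le_trans (norm_nonneg _) (hCp' _ hne.some.2)
  have hCFq0 : 0 ≤ CFq := le_trans (norm_nonneg _) (hCFq' _ hne.some.2)
  refine ⟨2 * Kp * CFq + 2 * Cp * (CF' * Kq), by positivity, fun x hx y hy => ?_⟩
  have key : dotp (p x) (F (q x)) - dotp (p y) (F (q y)) =
      dotp (p x - p y) (F (q x)) + dotp (p y) (F (q x) - F (q y)) := by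
    rw [dotp_sub_left, dotp_sub_right]; ring
  rw [key]
  have h1 : |dotp (p x - p y) (F (q x))| ≤ 2 * (Kp * |x - y|) * CFq := by
    refine le_trans (abs_dotp_le _ _) ?_
    have hpd : ‖p x - p y‖ ≤ Kp * |x - y| := by
      have := hp.dist_le_mul x hx y hy
      rwa [dist_eq_norm, Real.dist_eq] at this
    have := hCFq' x hx
    have h2K : (0:ℝ) ≤ 2 * ‖p x - p y‖ := by positivity
    nlinarith [norm_nonneg (p x - p y), norm_nonneg (F (q x)), NNReal.coe_nonneg Kp, abs_nonneg (x - y)]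
  have h2 : |dotp (p y) (F (q x) - F (q y))| ≤ 2 * Cp * (CF' * (Kq * |x - y|)) := by
    refine le_trans (abs_dotp_le _ _) ?_
    have hFd : ‖F (q x) - F (q y)‖ ≤ CF' * (Kq * |x - y|) := by
      have h1 := hFlip.dist_le_mul (q x) (hR (mem_image_of_mem q hx))
        (q y) (hR (mem_image_of_mem q hy))
      have h2 := hq.dist_le_mul x hx y hy
      rw [dist_eq_norm, dist_eq_norm] at h1
      rw [dist_eq_norm, Real.dist_eq] at h2
      calc ‖F (q x) - F (q y)‖ ≤ CF' * ‖q x - q y‖ := h1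
        _ ≤ CF' * (Kq * |x - y|) := by
            exact mul_le_mul_of_nonneg_left h2 (NNReal.coe_nonneg CF')
    have := hCp' y hy
    nlinarith [norm_nonneg (p y), norm_nonneg (F (q x) - F (q y)), NNReal.coe_nonneg CF',
      NNReal.coe_nonneg Kq, abs_nonneg (x - y)]
  calc |dotp (p x - p y) (F (q x)) + dotp (p y) (F (q x) - F (q y))|
      ≤ |dotp (p x - p y) (F (q x))| + |dotp (p y) (F (q x) - F (q y))| := abs_add_le _ _
    _ ≤ 2 * (Kp * |x - y|) * CFq + 2 * Cp * (CF' * (Kq * |x - y|)) := add_le_add h1 h2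
    _ = (2 * Kp * CFq + 2 * Cp * (CF' * Kq)) * |x - y| := by ring

lemma bracket_decomp (pp w Fv Gv : Fin 2 → ℝ) (hd : det2 Fv Gv ≠ 0) :
    dotp pp w = (det2 w Gv / det2 Fv Gv) * dotp pp Fv + (det2 Fv w / det2 Fv Gv) * dotp pp Gv := by
  field_simp
  simp only [dotp, det2, Fin.sum_univ_two] at *
  ring

end Aux

/-- An admissible pair on `[t0, t1]` for the control-affine system
`q' = v F(q) + u G(q)` with controls in `U = [-a, a] × [b, c]`. -/
def AdmissiblePair {n : ℕ} (F G : (Fin n → ℝ) → (Fin n → ℝ)) (a b c t0 t1 : ℝ)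
    (q : ℝ → Fin n → ℝ) (u v : ℝ → ℝ) : Prop :=
  Measurable u ∧ Measurable v ∧
  (∀ᵐ t ∂volume, t ∈ Icc t0 t1 → u t ∈ Icc (-a) a ∧ v t ∈ Icc b c) ∧
  (∃ K, LipschitzOnWith K q (Icc t0 t1)) ∧
  (∀ᵐ t ∂volume, t ∈ Icc t0 t1 →
    HasDerivWithinAt q (fun i => v t * F (q t) i + u t * G (q t) i) (Icc t0 t1) t)

/-- An extremal (in the sense of the Pontryagin Maximum Principle) of the control-affine
system `q' = v F(q) + u G(q)` with controls in `U = [-a, a] × [b, c]`, with multiplier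
`lam ≥ 0`: the covector `p` is Lipschitz, never vanishing, satisfies the adjoint
equation `p' = -(v (DF)ᵀ + u (DG)ᵀ) p` a.e., the maximality condition a.e., and the
Hamiltonian is constant equal to `lam` a.e. -/
def IsExtremal {n : ℕ} (F G : (Fin n → ℝ) → (Fin n → ℝ)) (a b c t0 t1 : ℝ)
    (p q : ℝ → Fin n → ℝ) (u v : ℝ → ℝ) (lam : ℝ) : Prop :=
  AdmissiblePair F G a b c t0 t1 q u v ∧
  (∃ K, LipschitzOnWith K p (Icc t0 t1)) ∧
  (∀ t ∈ Icc t0 t1, p t ≠ 0) ∧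
  (∀ᵐ t ∂volume, t ∈ Icc t0 t1 →
    HasDerivWithinAt p
      (fun i => -(v t * dotp (p t) (fderiv ℝ F (q t) (Pi.single i 1)) +
                  u t * dotp (p t) (fderiv ℝ G (q t) (Pi.single i 1))))
      (Icc t0 t1) t) ∧
  0 ≤ lam ∧
  (∀ᵐ t ∂volume, t ∈ Icc t0 t1 →
    (∀ w ∈ Icc (-a) a, ∀ z ∈ Icc b c,
      z * dotp (p t) (F (q t)) + w * dotp (p t) (G (q t)) ≤
      v t * dotp (p t) (F (q t)) + u t * dotp (p t) (G (q t))) ∧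
    v t * dotp (p t) (F (q t)) + u t * dotp (p t) (G (q t)) = lam)

/-- Along a normal, non-singular extremal of a two-input control-affine system on `ℝ²`
with `Δ_A(q) ≠ 0` and `g(q) = Δ_Bv(q)/Δ_A(q) > 0`, the switching function `φ_v` has
at most one zero, and at such a zero it passes from positive to negative values
(so the only possible `v`-switching is from `c = v_max` to `b = v_min`). -/
theorem at_most_one_v_switch_g_pos
    (F G : (Fin 2 → ℝ) → (Fin 2 → ℝ))
    (hF : ContDiff ℝ (⊤ : ℕ∞) F) (hG : ContDiff ℝ (⊤ : ℕ∞) G)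
    (a b c : ℝ) (ha : 0 < a) (hb : 0 < b) (hbc : b ≤ c)
    (t0 t1 : ℝ) (ht : t0 ≤ t1)
    (p q : ℝ → Fin 2 → ℝ) (u v : ℝ → ℝ) (lam : ℝ)
    (hext : IsExtremal F G a b c t0 t1 p q u v lam) (hnormal : 0 < lam)
    (hns : ∀ s0 s1, t0 ≤ s0 → s0 < s1 → s1 ≤ t1 →
      (¬ ∀ t ∈ Icc s0 s1, dotp (p t) (G (q t)) = 0) ∧
      (¬ ∀ t ∈ Icc s0 s1, dotp (p t) (F (q t)) = 0))
    (hA : ∀ t ∈ Icc t0 t1, det2 (F (q t)) (G (q t)) ≠ 0)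
    (hg : ∀ t ∈ Icc t0 t1,
      0 < det2 (F (q t)) (lieBracket F G (q t)) / det2 (F (q t)) (G (q t))) :
    (∀ τ ∈ Icc t0 t1, ∀ τ' ∈ Icc t0 t1,
      dotp (p τ) (F (q τ)) = 0 → dotp (p τ') (F (q τ')) = 0 → τ = τ') ∧
    (∀ τ ∈ Icc t0 t1, dotp (p τ) (F (q τ)) = 0 →
      (∀ t ∈ Ico t0 τ, 0 < dotp (p t) (F (q t))) ∧
      (∀ t ∈ Ioc τ t1, dotp (p t) (F (q t)) < 0)) := by

  obtain ⟨⟨hu_meas, hv_meas, hUae, ⟨Kq, hqlip⟩, hq'ae⟩, ⟨Kp, hplip⟩, hpne, hp'ae, hlam0, hmaxae⟩ :=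
    hext
  set Φ : ℝ → ℝ := fun t => dotp (p t) (F (q t)) with hΦdef
  set Ψ : ℝ → ℝ := fun t => dotp (p t) (G (q t)) with hΨdef
  have hpc : ContinuousOn p (Icc t0 t1) := hplip.continuousOn
  have hqc : ContinuousOn q (Icc t0 t1) := hqlip.continuousOn
  have hdotc : ∀ (H : (Fin 2 → ℝ) → (Fin 2 → ℝ)), Continuous H →
      ContinuousOn (fun t => dotp (p t) (H (q t))) (Icc t0 t1) := by
    intro H hH
    have heq : (fun t => dotp (p t) (H (q t))) =
        fun t => p t 0 * H (q t) 0 + p t 1 * H (q t) 1 := by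
      funext t; simp [dotp, Fin.sum_univ_two]
    rw [heq]
    have h0 : ContinuousOn (fun t => H (q t)) (Icc t0 t1) := hH.comp_continuousOn hqc
    exact (((continuous_apply (0 : Fin 2)).comp_continuousOn hpc).mul
        ((continuous_apply (0 : Fin 2)).comp_continuousOn h0)).add
      (((continuous_apply (1 : Fin 2)).comp_continuousOn hpc).mul
        ((continuous_apply (1 : Fin 2)).comp_continuousOn h0))
  have hΦc : ContinuousOn Φ (Icc t0 t1) := hdotc F hF.continuous
  have hΨc : ContinuousOn Ψ (Icc t0 t1) := hdotc G hG.continuous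
  rcases eq_or_lt_of_le ht with heq | hlt
  · -- degenerate case t0 = t1
    subst heq
    constructor
    · intro τ hτ τ' hτ' _ _
      have h1 : τ = t0 := le_antisymm hτ.2 hτ.1
      have h2 : τ' = t0 := le_antisymm hτ'.2 hτ'.1
      rw [h1, h2]
    · intro τ hτ _
      constructor
      · intro t htm
        exact absurd (lt_of_lt_of_le htm.2 hτ.2) (not_lt.2 htm.1)
      · intro t htm
        exact absurd (lt_of_le_of_lt hτ.1 htm.1) (not_lt.2 htm.2)
  -- main case
  have hc0 : 0 < c := lt_of_lt_of_le hb hbc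
  -- a.e. derivative of Φ
  have hder_ae : ∀ᵐ t ∂volume, t ∈ Icc t0 t1 →
      HasDerivWithinAt Φ (-(u t) * dotp (p t) (lieBracket F G (q t))) (Icc t0 t1) t := by
    filter_upwards [hp'ae, hq'ae] with t h1 h2 htI
    exact hasDeriv_phiv hF (h1 htI) (h2 htI)
  -- everywhere bound lam ≤ c|Φ| + a|Ψ|
  have hlow : ∀ t ∈ Icc t0 t1, 0 ≤ c * |Φ t| + a * |Ψ t| - lam := by
    apply ae_imp_everywhere hlt
    · exact ((continuousOn_const.mul hΦc.abs).add (continuousOn_const.mul hΨc.abs)).sub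
        continuousOn_const
    · filter_upwards [hUae, hmaxae] with t hU hm htI
      obtain ⟨hu, hv⟩ := hU htI
      obtain ⟨_, hconst⟩ := hm htI
      have h1 : v t * Φ t ≤ c * |Φ t| := by
        rcases le_or_gt 0 (Φ t) with h | h
        · calc v t * Φ t ≤ c * Φ t := mul_le_mul_of_nonneg_right hv.2 h
            _ = c * |Φ t| := by rw [abs_of_nonneg h]
        · have hv0 : 0 < v t := lt_of_lt_of_le hb hv.1
          have : v t * Φ t < 0 := mul_neg_of_pos_of_neg hv0 h
          have h2 : 0 ≤ c * |Φ t| := mul_nonneg hc0.le (abs_nonneg _)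
          linarith
      have h2 : u t * Ψ t ≤ a * |Ψ t| := by
        calc u t * Ψ t ≤ |u t * Ψ t| := le_abs_self _
          _ = |u t| * |Ψ t| := abs_mul _ _
          _ ≤ a * |Ψ t| := mul_le_mul_of_nonneg_right (abs_le.2 ⟨hu.1, hu.2⟩) (abs_nonneg _)
      linarith
  -- a.e. bang-bang in u
  have hbang : ∀ᵐ t ∂volume, t ∈ Icc t0 t1 → u t * Ψ t = a * |Ψ t| := by
    filter_upwards [hUae, hmaxae] with t hU hm htI
    obtain ⟨hu, hv⟩ := hU htI
    obtain ⟨hmaxi, _⟩ := hm htI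
    have hw : (if 0 ≤ Ψ t then a else -a) ∈ Icc (-a) a := by
      split_ifs
      · exact ⟨by linarith, le_rfl⟩
      · exact ⟨le_rfl, by linarith⟩
    have hkey := hmaxi _ hw (v t) ⟨hv.1, hv.2⟩
    have h1 : a * |Ψ t| ≤ u t * Ψ t := by
      have : (if 0 ≤ Ψ t then a else -a) * Ψ t = a * |Ψ t| := by
        split_ifs with h
        · rw [abs_of_nonneg h]
        · push_neg at h
          rw [abs_of_neg h]; ring
      rw [← this]; linarith
    have h2 : u t * Ψ t ≤ a * |Ψ t| := by
      calc u t * Ψ t ≤ |u t * Ψ t| := le_abs_self _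
        _ = |u t| * |Ψ t| := abs_mul _ _
        _ ≤ a * |Ψ t| := mul_le_mul_of_nonneg_right (abs_le.2 ⟨hu.1, hu.2⟩) (abs_nonneg _)
    linarith
  -- Lipschitz bound for Φ
  obtain ⟨KΦ, hKΦ0, hKΦ⟩ := lip_dotp hF hplip hqlip
  -- decomposition functions
  set Gg : ℝ → ℝ :=
    fun t => det2 (F (q t)) (lieBracket F G (q t)) / det2 (F (q t)) (G (q t)) with hGgdef
  set Aa : ℝ → ℝ :=
    fun t => det2 (lieBracket F G (q t)) (G (q t)) / det2 (F (q t)) (G (q t)) with hAadef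
  have hdecomp : ∀ t ∈ Icc t0 t1,
      dotp (p t) (lieBracket F G (q t)) = Aa t * Φ t + Gg t * Ψ t := by
    intro t htI
    have := bracket_decomp (p t) (lieBracket F G (q t)) (F (q t)) (G (q t)) (hA t htI)
    rw [this]
  -- continuity of Aa, Gg
  have hlieC : Continuous (fun x => lieBracket F G x) := by
    unfold lieBracket
    exact (((hG.fderiv_right (m := (⊤ : ℕ∞)) le_rfl).continuous).clm_apply hF.continuous).sub
      (((hF.fderiv_right (m := (⊤ : ℕ∞)) le_rfl).continuous).clm_apply hG.continuous)
  have hdet2c : ∀ (X Y : ℝ → Fin 2 → ℝ), ContinuousOn X (Icc t0 t1) →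
      ContinuousOn Y (Icc t0 t1) →
      ContinuousOn (fun t => det2 (X t) (Y t)) (Icc t0 t1) := by
    intro X Y hX hY
    have heq : (fun t => det2 (X t) (Y t)) = fun t => X t 0 * Y t 1 - X t 1 * Y t 0 := by
      funext t; simp [det2]
    rw [heq]
    exact (((continuous_apply (0 : Fin 2)).comp_continuousOn hX).mul
        ((continuous_apply (1 : Fin 2)).comp_continuousOn hY)).sub
      (((continuous_apply (1 : Fin 2)).comp_continuousOn hX).mul
        ((continuous_apply (0 : Fin 2)).comp_continuousOn hY))
  have hFqc : ContinuousOn (fun t => F (q t)) (Icc t0 t1) := hF.continuous.comp_continuousOn hqc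
  have hGqc : ContinuousOn (fun t => G (q t)) (Icc t0 t1) := hG.continuous.comp_continuousOn hqc
  have hLqc : ContinuousOn (fun t => lieBracket F G (q t)) (Icc t0 t1) :=
    hlieC.comp_continuousOn hqc
  have hGgC : ContinuousOn Gg (Icc t0 t1) :=
    (hdet2c _ _ hFqc hLqc).div (hdet2c _ _ hFqc hGqc) (fun t htI => hA t htI)
  have hAaC : ContinuousOn Aa (Icc t0 t1) :=
    (hdet2c _ _ hLqc hGqc).div (hdet2c _ _ hFqc hGqc) (fun t htI => hA t htI)
  have hIne : (Icc t0 t1).Nonempty := nonempty_Icc.2 ht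
  obtain ⟨tM, htM, hMAx'⟩ := isCompact_Icc.exists_isMaxOn hIne hAaC.abs
  have hMAx : ∀ x ∈ Icc t0 t1, |Aa x| ≤ |Aa tM| := fun x hx => hMAx' hx
  set MA : ℝ := |Aa tM| with hMAdef
  have hMA0 : 0 ≤ MA := abs_nonneg _
  obtain ⟨tg, htg, hg0x'⟩ := isCompact_Icc.exists_isMinOn hIne hGgC
  have hg0x : ∀ x ∈ Icc t0 t1, Gg tg ≤ Gg x := fun x hx => hg0x' hx
  set g0 : ℝ := Gg tg with hg0def
  have hg0pos : 0 < g0 := hg tg htg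
  -- constants
  set δ : ℝ := g0 * lam / 4 with hδdef
  have hδpos : 0 < δ := by positivity
  set ε1 : ℝ := lam / (2 * c) with hε1def
  set ε2 : ℝ := g0 * lam / (4 * (a * MA + 1)) with hε2def
  have hε1pos : 0 < ε1 := by positivity
  have hε2pos : 0 < ε2 := by positivity
  set ε : ℝ := min ε1 ε2 with hεdef
  have hεpos : 0 < ε := lt_min hε1pos hε2pos
  have hkeybound : a * MA * ε2 ≤ δ := by
    have h4 : (0:ℝ) < 4 * (a * MA + 1) := by positivity
    have h2 : a * MA * (g0 * lam / (4 * (a * MA + 1))) = g0 * lam * (a * MA) / (4 * (a * MA + 1)) := by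
      ring
    rw [hε2def, hδdef, h2, div_le_div_iff₀ h4 (by norm_num : (0:ℝ) < 4)]
    nlinarith [mul_pos hg0pos hnormal]
  -- the crossing lemma
  have crossing : ∀ τ ∈ Icc t0 t1, Φ τ = 0 → ∃ l r, (t0 ≤ l ∧ l ≤ τ) ∧ (τ ≤ r ∧ r ≤ t1) ∧
      (t0 < τ → l < τ) ∧ (τ < t1 → τ < r) ∧
      (∀ x ∈ Icc l r, ∀ y ∈ Icc l r, x < y → Φ y < Φ x) := by
    intro τ hτ hτ0
    have h0 : |Φ τ| < ε := by rw [hτ0, abs_zero]; exact hεpos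
    have hev : ∀ᶠ x in nhdsWithin τ (Icc t0 t1), |Φ x| < ε := by
      have htd : ContinuousWithinAt (fun x => |Φ x|) (Icc t0 t1) τ :=
        continuous_abs.continuousAt.comp_continuousWithinAt (hΦc τ hτ)
      exact htd.eventually (eventually_lt_nhds h0)
    obtain ⟨η, hη, hball⟩ := Metric.mem_nhdsWithin_iff.1 hev
    set l : ℝ := max t0 (τ - η / 2) with hldef
    set r : ℝ := min t1 (τ + η / 2) with hrdef
    have hlτ : l ≤ τ := max_le hτ.1 (by linarith)
    have hτr : τ ≤ r := le_min hτ.2 (by linarith)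
    have hlr_sub : Icc l r ⊆ Icc t0 t1 :=
      Icc_subset_Icc (le_max_left _ _) (min_le_left _ _)
    have hsmall : ∀ x ∈ Icc l r, |Φ x| < ε := by
      intro x hx
      apply hball
      constructor
      · rw [Metric.mem_ball, Real.dist_eq]
        have h1 : τ - η / 2 ≤ x := le_trans (le_max_right _ _) hx.1
        have h2 : x ≤ τ + η / 2 := le_trans hx.2 (min_le_right _ _)
        rw [abs_lt]; constructor <;> linarith
      · exact hlr_sub hx
    -- a.e. derivative bound on Icc l r
    have hae' : ∀ᵐ x ∂volume, x ∈ Icc l r →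
        ∃ w, w ≤ -δ ∧ HasDerivWithinAt Φ w (Icc l r) x := by
      filter_upwards [hder_ae, hbang, hUae] with x h1 h2 h3 hxJ
      have hxI : x ∈ Icc t0 t1 := hlr_sub hxJ
      refine ⟨-(u x) * dotp (p x) (lieBracket F G (q x)), ?_, ((h1 hxI).mono hlr_sub)⟩
      rw [hdecomp x hxI]
      obtain ⟨hu, _⟩ := h3 hxI
      have habsu : |u x| ≤ a := abs_le.2 ⟨hu.1, hu.2⟩
      have hb1 : u x * Ψ x = a * |Ψ x| := h2 hxI
      have hsm : |Φ x| < ε := hsmall x hxJ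
      have hAabs : |Aa x| ≤ MA := hMAx x hxI
      have hGgx : g0 ≤ Gg x := hg0x x hxI
      have hΨbig : lam / 2 ≤ a * |Ψ x| := by
        have hl := hlow x hxI
        have hce : c * ε1 = lam / 2 := by
          rw [hε1def]; field_simp
        have hcp : c * |Φ x| ≤ c * ε1 :=
          mul_le_mul_of_nonneg_left (le_of_lt (lt_of_lt_of_le hsm (min_le_left _ _))) hc0.le
        linarith
      have e1 : -(u x) * (Aa x * Φ x + Gg x * Ψ x) =
          -(u x * Aa x * Φ x) - Gg x * (u x * Ψ x) := by ring
      rw [e1, hb1]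
      have T1 : -(u x * Aa x * Φ x) ≤ a * MA * ε2 := by
        have habs : |u x * Aa x * Φ x| ≤ a * MA * ε2 := by
          rw [abs_mul, abs_mul]
          have hΦε2 : |Φ x| ≤ ε2 := hsm.le.trans (min_le_right _ _)
          apply mul_le_mul (mul_le_mul habsu hAabs (abs_nonneg _) ha.le) hΦε2 (abs_nonneg _)
          positivity
        exact le_trans (neg_le_abs _) habs
      have T2 : g0 * (lam / 2) ≤ Gg x * (a * |Ψ x|) :=
        mul_le_mul hGgx hΨbig (by positivity) (le_trans hg0pos.le hGgx)
      have hfin : a * MA * ε2 - g0 * (lam / 2) ≤ -δ := by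
        rw [hδdef] at hkeybound ⊢
        linarith
      linarith
    have hdec := decay_of_ae_deriv_le hKΦ0
      (fun x hx y hy => hKΦ x (hlr_sub hx) y (hlr_sub hy)) hae'
    refine ⟨l, r, ⟨le_max_left _ _, hlτ⟩, ⟨hτr, min_le_left _ _⟩, ?_, ?_, ?_⟩
    · intro h; exact max_lt h (by linarith)
    · intro h; exact lt_min h (by linarith)
    · intro x hx y hy hxy
      have := hdec x hx y hy hxy.le
      nlinarith [mul_pos hδpos (sub_pos.2 hxy)]
  -- uniqueness of the zero
  have huniq : ∀ τ ∈ Icc t0 t1, ∀ τ' ∈ Icc t0 t1, Φ τ = 0 → Φ τ' = 0 → τ = τ' := by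
    have key : ∀ τ ∈ Icc t0 t1, ∀ τ' ∈ Icc t0 t1, Φ τ = 0 → Φ τ' = 0 → τ < τ' → False := by
      intro τ hτ τ' hτ' hτ0 hτ'0 hττ'
      obtain ⟨l, r, ⟨hl0, hlτ⟩, ⟨hτr, hr1⟩, _, hrstrict, hdec⟩ := crossing τ hτ hτ0
      have hτltr : τ < r := hrstrict (lt_of_lt_of_le hττ' hτ'.2)
      by_cases hcase : τ' ≤ r
      · have : Φ τ' < Φ τ := hdec τ ⟨hlτ, hτr⟩ τ' ⟨le_trans hlτ hττ'.le, hcase⟩ hττ'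
        rw [hτ0, hτ'0] at this; exact lt_irrefl 0 this
      · push_neg at hcase
        have hΦr : Φ r < 0 := by
          have := hdec τ ⟨hlτ, hτr⟩ r ⟨le_trans hlτ hτr, le_rfl⟩ hτltr
          rwa [hτ0] at this
        have hrt0 : t0 ≤ r := le_trans hτ.1 hτr
        have hsubr : Icc r τ' ⊆ Icc t0 t1 := Icc_subset_Icc hrt0 hτ'.2
        set S : Set ℝ := Icc r τ' ∩ Φ ⁻¹' {0} with hSdef
        have hSclosed : IsClosed S :=
          (hΦc.mono hsubr).preimage_isClosed_of_isClosed isClosed_Icc isClosed_singleton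
        have hSne : S.Nonempty := ⟨τ', ⟨hcase.le, le_rfl⟩, by simp [hτ'0]⟩
        have hSbdd : BddBelow S := ⟨r, fun x hx => hx.1.1⟩
        set σ : ℝ := sInf S with hσdef
        have hσS : σ ∈ S := hSclosed.csInf_mem hSne hSbdd
        have hσI : σ ∈ Icc t0 t1 := hsubr hσS.1
        have hσ0 : Φ σ = 0 := hσS.2
        have hrσ : r < σ := lt_of_le_of_ne hσS.1.1 (fun h => by rw [← h] at hσ0; linarith)
        have hmin : ∀ x ∈ Icc r τ', Φ x = 0 → σ ≤ x := fun x hx h0 =>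
          csInf_le hSbdd ⟨hx, by simp [h0]⟩
        have hneg : ∀ x ∈ Ico r σ, Φ x < 0 := by
          intro x hx
          have hxτ' : x ≤ τ' := le_trans hx.2.le hσS.1.2
          rcases lt_trichotomy (Φ x) 0 with h | h | h
          · exact h
          · exact absurd (hmin x ⟨hx.1, hxτ'⟩ h) (not_le.2 hx.2)
          · exfalso
            have hsubx : Icc r x ⊆ Icc t0 t1 := Icc_subset_Icc hrt0 (le_trans hxτ' hτ'.2)
            obtain ⟨y, hy, hΦy⟩ := intermediate_value_Icc hx.1 (hΦc.mono hsubx)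
              (⟨hΦr.le, h.le⟩ : (0:ℝ) ∈ Icc (Φ r) (Φ x))
            have : σ ≤ y := hmin y ⟨hy.1, le_trans hy.2 hxτ'⟩ hΦy
            linarith [lt_of_le_of_lt hy.2 hx.2]
        obtain ⟨l', r', ⟨hl'0, hl'σ⟩, ⟨hσr', hr'1⟩, hl'strict, _, hdec'⟩ := crossing σ hσI hσ0
        have hl'lt : l' < σ := hl'strict (lt_of_le_of_lt hrt0 hrσ)
        set θ : ℝ := max l' r with hθdef
        have hθσ : θ < σ := max_lt hl'lt hrσ
        have hθJ : θ ∈ Icc l' r' := ⟨le_max_left _ _, le_trans hθσ.le hσr'⟩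
        have h1 : Φ σ < Φ θ := hdec' θ hθJ σ ⟨hl'σ, hσr'⟩ hθσ
        have h2 : Φ θ < 0 := hneg θ ⟨le_max_right _ _, hθσ⟩
        rw [hσ0] at h1; linarith
    intro τ hτ τ' hτ' hτ0 hτ'0
    rcases lt_trichotomy τ τ' with h | h | h
    · exact absurd (key τ hτ τ' hτ' hτ0 hτ'0 h) not_false
    · exact h
    · exact absurd (key τ' hτ' τ hτ hτ'0 hτ0 h) not_false
  -- sign part
  have hsign : ∀ τ ∈ Icc t0 t1, Φ τ = 0 →
      (∀ t ∈ Ico t0 τ, 0 < Φ t) ∧ (∀ t ∈ Ioc τ t1, Φ t < 0) := by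
    intro τ hτ hτ0
    obtain ⟨l, r, ⟨hl0, hlτ⟩, ⟨hτr, hr1⟩, hlstrict, hrstrict, hdec⟩ := crossing τ hτ hτ0
    constructor
    · intro t htm
      have ht0τ : t0 < τ := lt_of_le_of_lt htm.1 htm.2
      have hllt : l < τ := hlstrict ht0τ
      have htI : t ∈ Icc t0 t1 := ⟨htm.1, le_trans htm.2.le hτ.2⟩
      by_cases hcl : l ≤ t
      · have := hdec t ⟨hcl, le_trans htm.2.le hτr⟩ τ ⟨hlτ, hτr⟩ htm.2
        rwa [hτ0] at this
      · push_neg at hcl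
        have hΦl : 0 < Φ l := by
          have := hdec l ⟨le_rfl, le_trans hlτ hτr⟩ τ ⟨hlτ, hτr⟩ hllt
          rwa [hτ0] at this
        rcases lt_trichotomy (Φ t) 0 with h | h | h
        · exfalso
          have hsubx : Icc t l ⊆ Icc t0 t1 := Icc_subset_Icc htm.1 (le_trans hlτ hτ.2)
          obtain ⟨y, hy, hΦy⟩ := intermediate_value_Icc hcl.le (hΦc.mono hsubx)
            (⟨h.le, hΦl.le⟩ : (0:ℝ) ∈ Icc (Φ t) (Φ l))
          have : y = τ := huniq y (hsubx hy) τ hτ hΦy hτ0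
          rw [this] at hy
          linarith [lt_of_le_of_lt hy.2 hllt]
        · exact absurd (huniq t htI τ hτ h hτ0) (ne_of_lt htm.2)
        · exact h
    · intro t htm
      have hτt1 : τ < t1 := lt_of_lt_of_le htm.1 htm.2
      have hrlt : τ < r := hrstrict hτt1
      have htI : t ∈ Icc t0 t1 := ⟨le_trans hτ.1 htm.1.le, htm.2⟩
      by_cases hcr : t ≤ r
      · have := hdec τ ⟨hlτ, hτr⟩ t ⟨le_trans hlτ htm.1.le, hcr⟩ htm.1
        rwa [hτ0] at this
      · push_neg at hcr
        have hΦr : Φ r < 0 := by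
          have := hdec τ ⟨hlτ, hτr⟩ r ⟨le_trans hlτ hτr, le_rfl⟩ hrlt
          rwa [hτ0] at this
        rcases lt_trichotomy (Φ t) 0 with h | h | h
        · exact h
        · exact absurd (huniq t htI τ hτ h hτ0) (ne_of_gt htm.1)
        · exfalso
          have hsubx : Icc r t ⊆ Icc t0 t1 := Icc_subset_Icc (le_trans hτ.1 hτr) htm.2
          obtain ⟨y, hy, hΦy⟩ := intermediate_value_Icc hcr.le (hΦc.mono hsubx)
            (⟨hΦr.le, h.le⟩ : (0:ℝ) ∈ Icc (Φ r) (Φ t))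
          have : y = τ := huniq y (hsubx hy) τ hτ hΦy hτ0
          rw [this] at hy
          linarith [lt_of_lt_of_le hrlt hy.1]
  exact ⟨huniq, hsign⟩
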